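/- Let L be a finite lattice, let ⊥ = x_0 < x_1 < ⋯ < x_k = ⊤ be a chain of left modular elements of L, and let λ be the labeling assigning to each cover relation y ⋖ z the unique index i such that x_{i+1}/x_i weakly separates y ⋖ z. Fix w ≤ z in L and let w = c_0 < c_1 < ⋯ < c_m = z be the chain defined by c_0 = w and c_{j+1} = c_j ⊔ (x_{i(j)+1} ⊓ z), where i(j) is the maximal index such that c_j ⊔ (x_{i(j)} ⊓ z) = c_j. Then a maximal chain w = d_0 ⋖ d_1 ⋖ ⋯ ⋖ d_n = z of the interval [w, z] has weakly increasing label sequence λ(d_0 ⋖ d_1) ≤ λ(d_1 ⋖ d_2) ≤ ⋯ ≤ λ(d_{n-1} ⋖ d_n) if and only if it contains every c_j, i.e. {c_0, …, c_m} ⊆ {d_0, …, d_n}. -/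

import Mathlib

/-!
Along a maximal chain `d` of `[w, z]`, a cover `d_s ⋖ d_{s+1}` gets the label `i` exactly when
`x_i ⊓ d_{s+1} ≤ d_s` and `d_{s+1} ≤ x_{i+1} ⊔ d_s`: by left modularity the first inequality
fails for every larger index and the second for every smaller one. Hence a cover lying between
`c_j` and `c_{j+1}` has label `i(j)`, and the indices `i(j)` strictly increase, so a chain
through all `c_j` has increasing labels. Conversely, if the labels increase, the meet conditions
propagate up the chain to give `x_{λ_t} ⊓ z ≤ d_t`; then a cover starting in `[c_j, c_{j+1})`
must have label `i(j)` and end below `c_{j+1}`, so the chain cannot jump over `c_{j+1}`.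
-/

theorem Fin.exists_castSucc_and_not_succ {m : ℕ} {p : Fin (m + 1) → Prop} (h0 : p 0)
    (hlast : ¬ p (Fin.last m)) : ∃ j : Fin m, p j.castSucc ∧ ¬ p j.succ := by
  by_contra! h
  exact hlast (Fin.induction (motive := p) h0 h _)

theorem Fin.mem_range_of_lt_imp_succ_le {α : Type*} [PartialOrder α] {n : ℕ}
    {d : Fin (n + 1) → α} {a : α} (h0 : d 0 ≤ a) (hlast : a ≤ d (Fin.last n))
    (hstep : ∀ s : Fin n, d s.castSucc < a → d s.succ ≤ a) : a ∈ Set.range d := by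
  by_contra ha
  have hle : ∀ s, d s ≤ a :=
    Fin.induction h0 fun s hs => hstep s (hs.lt_of_ne fun h => ha ⟨_, h⟩)
  exact ha ⟨_, (hle _).antisymm hlast⟩

theorem Fin.exists_castSucc_le_and_succ_le_of_range_subset {α : Type*} [PartialOrder α]
    {m n : ℕ} {c : Fin (m + 1) → α} {d : Fin (n + 1) → α} (hd : StrictMono d)
    (hcd : Set.range c ⊆ Set.range d) (h0 : c 0 ≤ d 0) (hlast : d (Fin.last n) ≤ c (Fin.last m))
    (s : Fin n) : ∃ j : Fin m, c j.castSucc ≤ d s.castSucc ∧ d s.succ ≤ c j.succ := by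
  obtain ⟨j, hj, hj'⟩ := Fin.exists_castSucc_and_not_succ (p := fun j => c j ≤ d s.castSucc)
    (h0.trans (hd.monotone (Fin.zero_le _)))
    fun h => (hd Fin.castSucc_lt_succ).not_ge ((hd.monotone (Fin.le_last _)).trans (hlast.trans h))
  obtain ⟨u, hu⟩ := hcd ⟨j.succ, rfl⟩
  refine ⟨j, hj, hu ▸ hd.monotone ?_⟩
  rw [← hu, hd.le_iff_le, not_le] at hj'
  exact Fin.castSucc_lt_iff_succ_le.1 hj'

section Lattice

variable {L : Type*} [Lattice L] {k : ℕ}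

def IsLeftModular (a : L) : Prop :=
  ∀ y z : L, y ≤ z → (y ⊔ a) ⊓ z = y ⊔ (a ⊓ z)

def WeaklySeparates (x : Fin (k + 1) → L) (i : Fin k) (y z : L) : Prop :=
  x i.castSucc ⊓ z = x i.castSucc ⊓ y ∧ x i.succ ⊔ z = x i.succ ⊔ y

namespace WeaklySeparates

variable {x : Fin (k + 1) → L} {i : Fin k} {y z : L}

theorem le_sup_inf (h : WeaklySeparates x i y z) (hlm : IsLeftModular (x i.succ)) (hyz : y ≤ z)
    {b : L} (hzb : z ≤ b) : z ≤ y ⊔ (x i.succ ⊓ b) := by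
  have hz : z ≤ y ⊔ x i.succ := by
    rw [sup_comm, ← h.2]
    exact le_sup_right
  rw [← hlm y b (hyz.trans hzb)]
  exact le_inf hz hzb

theorem le_castSucc_of_inf_le (h : WeaklySeparates x i y z) (hx : Monotone x)
    (hlm : IsLeftModular (x i.succ)) (hyz : y < z) {j : Fin (k + 1)} (hj : x j ⊓ z ≤ y) :
    j ≤ i.castSucc := by
  by_contra! hij
  have hinf : x i.succ ⊓ z ≤ y :=
    (inf_le_inf_right _ (hx (Fin.castSucc_lt_iff_succ_le.1 hij))).trans hj
  exact hyz.not_ge ((h.le_sup_inf hlm hyz.le le_rfl).trans (sup_le le_rfl hinf))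

theorem succ_le_of_le_sup (h : WeaklySeparates x i y z) (hx : Monotone x)
    (hlm : IsLeftModular (x i.castSucc)) (hyz : y < z) {j : Fin (k + 1)} (hj : z ≤ x j ⊔ y) :
    i.succ ≤ j := by
  by_contra! hij
  have hz : z ≤ (y ⊔ x i.castSucc) ⊓ z := by
    refine le_inf (hj.trans ?_) le_rfl
    rw [sup_comm]
    exact sup_le_sup_left (hx (Fin.le_castSucc_iff.2 hij)) _
  rw [hlm y z hyz.le, h.1] at hz
  exact hyz.not_ge (hz.trans (sup_le le_rfl inf_le_right))

theorem eq_of_inf_le_of_le_sup (h : WeaklySeparates x i y z) (hx : Monotone x)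
    (hlm : ∀ i, IsLeftModular (x i)) (hyz : y < z) {j : Fin k}
    (hinf : x j.castSucc ⊓ z ≤ y) (hsup : z ≤ x j.succ ⊔ y) : i = j :=
  le_antisymm (Fin.succ_le_succ_iff.1 (h.succ_le_of_le_sup hx (hlm _) hyz hsup))
    (Fin.castSucc_le_castSucc_iff.1 (h.le_castSucc_of_inf_le hx (hlm _) hyz hinf))


theorem eq_of_le_of_le_sup_inf (h : WeaklySeparates x i y z) (hx : Monotone x)
    (hlm : ∀ i, IsLeftModular (x i)) (hyz : y < z) {a b : L} {j : Fin k}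
    (hab : x j.castSucc ⊓ b ≤ a) (hay : a ≤ y) (hzb : z ≤ b) (hz : z ≤ a ⊔ (x j.succ ⊓ b)) :
    i = j :=
  h.eq_of_inf_le_of_le_sup hx hlm hyz ((inf_le_inf_left _ hzb).trans (hab.trans hay))
    (hz.trans (sup_le (hay.trans le_sup_right) (inf_le_left.trans le_sup_left)))

theorem le_sup_inf_of_lt (h : WeaklySeparates x i y z) (hx : Monotone x)
    (hlm : ∀ i, IsLeftModular (x i)) (hyz : y < z) {a b : L} {j : Fin k} (hay : a ≤ y)
    (hzb : z ≤ b) (hib : x i.castSucc ⊓ b ≤ y) (hlt : y < a ⊔ (x j.succ ⊓ b)) :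
    z ≤ a ⊔ (x j.succ ⊓ b) := by
  have hij : i ≤ j := by
    by_contra! hji
    exact hlt.not_ge <| sup_le hay <|
      (inf_le_inf_right _ (hx (Fin.succ_le_castSucc_iff.2 hji))).trans hib
  calc z ≤ y ⊔ (x i.succ ⊓ b) := h.le_sup_inf (hlm _) hyz.le hzb
    _ ≤ a ⊔ (x j.succ ⊓ b) :=
      sup_le hlt.le (le_sup_of_le_right (inf_le_inf_right _ (hx (Fin.succ_le_succ_iff.2 hij))))

end WeaklySeparates

section Chains

variable {m n : ℕ} {x : Fin (k + 1) → L} {z : L} {c : Fin (m + 1) → L} {ι : Fin m → Fin k}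
  {d : Fin (n + 1) → L} {l : Fin n → Fin k}

theorem monotone_of_succ_eq_sup
    (hcsucc : ∀ j : Fin m, c j.succ = c j.castSucc ⊔ (x (ι j).succ ⊓ z)) :
    Monotone c :=
  Fin.monotone_iff_le_succ.2 fun j => (hcsucc j).symm ▸ le_sup_left

theorem strictMono_indices (hcsucc : ∀ j : Fin m, c j.succ = c j.castSucc ⊔ (x (ι j).succ ⊓ z))
    (hιmax : ∀ j : Fin m, ∀ i : Fin (k + 1),
      c j.castSucc ⊔ (x i ⊓ z) = c j.castSucc → i ≤ (ι j).castSucc) :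
    StrictMono ι := fun j j' hjj' =>
  Fin.succ_le_castSucc_iff.1 <| hιmax j' _ <| sup_eq_left.2 <|
    ((hcsucc j).symm ▸ le_sup_right : x (ι j).succ ⊓ z ≤ c j.succ).trans
      (monotone_of_succ_eq_sup hcsucc (Fin.succ_le_castSucc_iff.2 hjj'))

theorem inf_le_of_monotone_labels (hx : Monotone x) (hd : Monotone d) (hl : Monotone l)
    (hsep : ∀ s, WeaklySeparates x (l s) (d s.castSucc) (d s.succ)) (t : Fin n)
    (s : Fin (n + 1)) : x (l t).castSucc ⊓ d s ≤ d t.castSucc := by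
  induction s using Fin.induction with
  | zero => exact inf_le_right.trans (hd (Fin.zero_le _))
  | succ s ih =>
    rcases le_or_gt s.succ t.castSucc with hst | hts
    · exact inf_le_right.trans (hd hst)
    · have hle : x (l t).castSucc ≤ x (l s).castSucc :=
        hx (Fin.castSucc_le_castSucc_iff.2 (hl (Fin.castSucc_lt_succ_iff.1 hts)))
      calc x (l t).castSucc ⊓ d s.succ
          = x (l t).castSucc ⊓ (x (l s).castSucc ⊓ d s.succ) := by
            rw [← inf_assoc, inf_eq_left.2 hle]
        _ = x (l t).castSucc ⊓ (x (l s).castSucc ⊓ d s.castSucc) := by rw [(hsep s).1]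
        _ ≤ x (l t).castSucc ⊓ d s.castSucc := inf_le_inf_left _ inf_le_right
        _ ≤ d t.castSucc := ih

theorem range_subset_range_of_monotone_labels (hx : Monotone x)
    (hlm : ∀ i, IsLeftModular (x i)) (hd : StrictMono d)
    (hsep : ∀ s, WeaklySeparates x (l s) (d s.castSucc) (d s.succ)) (hc0 : c 0 = d 0)
    (hcm : c (Fin.last m) = z) (hdn : d (Fin.last n) = z)
    (hcsucc : ∀ j : Fin m, c j.succ = c j.castSucc ⊔ (x (ι j).succ ⊓ z)) (hl : Monotone l) :
    Set.range c ⊆ Set.range d := by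
  have hc := monotone_of_succ_eq_sup hcsucc
  have hkey (s : Fin n) : x (l s).castSucc ⊓ z ≤ d s.castSucc :=
    hdn ▸ inf_le_of_monotone_labels hx hd.monotone hl hsep s (Fin.last n)
  rintro _ ⟨j, rfl⟩
  induction j using Fin.induction with
  | zero => exact ⟨0, hc0.symm⟩
  | succ j ih =>
    obtain ⟨t, ht⟩ := ih
    refine Fin.mem_range_of_lt_imp_succ_le (hc0 ▸ hc (Fin.zero_le _))
      (hdn ▸ hcm ▸ hc (Fin.le_last _)) fun s hs => ?_
    rcases le_or_gt t s.castSucc with hts | hst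
    · rw [hcsucc j] at hs ⊢
      exact (hsep s).le_sup_inf_of_lt hx hlm (hd Fin.castSucc_lt_succ) (ht ▸ hd.monotone hts)
        (hdn ▸ hd.monotone (Fin.le_last _)) (hkey s) hs
    · exact (hd.monotone (Fin.castSucc_lt_iff_succ_le.1 hst)).trans
        (ht ▸ hc (Fin.castSucc_le_succ j))

theorem monotone_labels_of_range_subset_range (hx : Monotone x)
    (hlm : ∀ i, IsLeftModular (x i)) (hd : StrictMono d)
    (hsep : ∀ s, WeaklySeparates x (l s) (d s.castSucc) (d s.succ)) (hc0 : c 0 = d 0)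
    (hcm : c (Fin.last m) = z) (hdn : d (Fin.last n) = z)
    (hι : ∀ j : Fin m, c j.castSucc ⊔ (x (ι j).castSucc ⊓ z) = c j.castSucc)
    (hιmax : ∀ j : Fin m, ∀ i : Fin (k + 1),
      c j.castSucc ⊔ (x i ⊓ z) = c j.castSucc → i ≤ (ι j).castSucc)
    (hcsucc : ∀ j : Fin m, c j.succ = c j.castSucc ⊔ (x (ι j).succ ⊓ z))
    (hcd : Set.range c ⊆ Set.range d) : Monotone l := by
  have hc := monotone_of_succ_eq_sup hcsucc
  have hblock := Fin.exists_castSucc_le_and_succ_le_of_range_subset hd hcd hc0.le (hcm ▸ hdn.le)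
  have hlabel (s : Fin n) (j : Fin m) (h₁ : c j.castSucc ≤ d s.castSucc)
      (h₂ : d s.succ ≤ c j.succ) : l s = ι j :=
    (hsep s).eq_of_le_of_le_sup_inf hx hlm (hd Fin.castSucc_lt_succ) (sup_eq_left.1 (hι j)) h₁
      (hdn ▸ hd.monotone (Fin.le_last _)) (hcsucc j ▸ h₂)
  intro a b hab
  obtain ⟨ja, ha₁, ha₂⟩ := hblock a
  obtain ⟨jb, hb₁, hb₂⟩ := hblock b
  have hjab : ja ≤ jb := by
    by_contra! hba
    refine lt_irrefl (c jb.succ) ?_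
    calc c jb.succ ≤ c ja.castSucc := hc (Fin.succ_le_castSucc_iff.2 hba)
      _ ≤ d a.castSucc := ha₁
      _ ≤ d b.castSucc := hd.monotone (Fin.castSucc_le_castSucc_iff.2 hab)
      _ < d b.succ := hd Fin.castSucc_lt_succ
      _ ≤ c jb.succ := hb₂
  rw [hlabel a ja ha₁ ha₂, hlabel b jb hb₁ hb₂]
  exact (strictMono_indices hcsucc hιmax).monotone hjab

end Chains

end Lattice

theorem increasing_iff_extends_c_general {L : Type*} [Lattice L]
    {k : ℕ} (x : Fin (k + 1) → L)
    (hmono : StrictMono x)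
    (hlm : ∀ i : Fin (k + 1), ∀ y z : L, y ≤ z →
      (y ⊔ x i) ⊓ z = y ⊔ (x i ⊓ z))
    -- the labeling by weak separation
    (lab : L → L → Fin k)
    (hlab : ∀ y z : L, y ⋖ z →
      x (lab y z).castSucc ⊓ z = x (lab y z).castSucc ⊓ y ∧
        x (lab y z).succ ⊔ z = x (lab y z).succ ⊔ y)
    -- the interval `[w, z]`
    (w z : L)
    -- the chain `c` with its indices `ι j = i(j)`
    {m : ℕ} (c : Fin (m + 1) → L) (hc0 : c 0 = w) (hcm : c (Fin.last m) = z)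
    (ι : Fin m → Fin k)
    (hι : ∀ j : Fin m, c j.castSucc ⊔ (x (ι j).castSucc ⊓ z) = c j.castSucc)
    (hιmax : ∀ j : Fin m, ∀ i : Fin (k + 1),
      c j.castSucc ⊔ (x i ⊓ z) = c j.castSucc → i ≤ (ι j).castSucc)
    (hcsucc : ∀ j : Fin m, c j.succ = c j.castSucc ⊔ (x (ι j).succ ⊓ z))
    -- a maximal chain `d` of `[w, z]`
    {n : ℕ} (d : Fin (n + 1) → L) (hd0 : d 0 = w) (hdn : d (Fin.last n) = z)
    (hdcov : ∀ j : Fin n, d j.castSucc ⋖ d j.succ) :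
    Monotone (fun j : Fin n => lab (d j.castSucc) (d j.succ)) ↔
      Set.range c ⊆ Set.range d := by
  have hd : StrictMono d := Fin.strictMono_iff_lt_succ.2 fun s => (hdcov s).lt
  have hsep (s : Fin n) : WeaklySeparates x (lab (d s.castSucc) (d s.succ)) (d s.castSucc)
      (d s.succ) := hlab _ _ (hdcov s)
  have hc0d : c 0 = d 0 := hc0.trans hd0.symm
  exact ⟨range_subset_range_of_monotone_labels hmono.monotone hlm hd hsep hc0d hcm hdn hcsucc,
    monotone_labels_of_range_subset_range hmono.monotone hlm hd hsep hc0d hcm hdn hι hιmax hcsucc⟩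

/-- Lemma 2.5 of the paper.  Let `⊥ = x₀ < ⋯ < x_k = ⊤` be a chain of left
modular elements of a finite lattice `L`, and let `lab` be the labeling
assigning to each cover relation `y ⋖ z` the unique index `i` such that
`x_{i+1}/x_i` weakly separates it.  Fix `w ≤ z` and let
`w = c₀ < c₁ < ⋯ < c_m = z` be the chain with
`c_{j+1} = c_j ⊔ (x_{i(j)+1} ⊓ z)`, where `i(j)` is the maximal index with
`c_j ⊔ (x_{i(j)} ⊓ z) = c_j`.  Then a maximal chain `d` of `[w, z]` has weakly
increasing labels iff it contains every `c_j`. -/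
theorem increasing_iff_extends_c {L : Type*} [Lattice L]
    [BoundedOrder L] [Fintype L] {k : ℕ} (x : Fin (k + 1) → L)
    (hmono : StrictMono x) (hbot : x 0 = ⊥) (htop : x (Fin.last k) = ⊤)
    (hlm : ∀ i : Fin (k + 1), ∀ y z : L, y ≤ z →
      (y ⊔ x i) ⊓ z = y ⊔ (x i ⊓ z))
    -- the labeling by weak separation
    (lab : L → L → Fin k)
    (hlab : ∀ y z : L, y ⋖ z →
      x (lab y z).castSucc ⊓ z = x (lab y z).castSucc ⊓ y ∧
        x (lab y z).succ ⊔ z = x (lab y z).succ ⊔ y)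
    -- the interval `[w, z]`
    (w z : L) (hwz : w ≤ z)
    -- the chain `c` with its indices `ι j = i(j)`
    {m : ℕ} (c : Fin (m + 1) → L) (hc0 : c 0 = w) (hcm : c (Fin.last m) = z)
    (ι : Fin m → Fin k)
    (hι : ∀ j : Fin m, c j.castSucc ⊔ (x (ι j).castSucc ⊓ z) = c j.castSucc)
    (hιmax : ∀ j : Fin m, ∀ i : Fin (k + 1),
      c j.castSucc ⊔ (x i ⊓ z) = c j.castSucc → i ≤ (ι j).castSucc)
    (hcsucc : ∀ j : Fin m, c j.succ = c j.castSucc ⊔ (x (ι j).succ ⊓ z))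
    -- a maximal chain `d` of `[w, z]`
    {n : ℕ} (d : Fin (n + 1) → L) (hd0 : d 0 = w) (hdn : d (Fin.last n) = z)
    (hdcov : ∀ j : Fin n, d j.castSucc ⋖ d j.succ) :
    Monotone (fun j : Fin n => lab (d j.castSucc) (d j.succ)) ↔
      Set.range c ⊆ Set.range d :=
  increasing_iff_extends_c_general x hmono hlm lab hlab w z c hc0 hcm ι hι hιmax hcsucc d hd0 hdn
    hdcov
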